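/- Let G = (V,E) be a strongly connected directed graph containing at least one self-loop, with classical diameter d_c(G) = max over ordered pairs (v,v′) of the length of the shortest directed path from v to v′. In the deterministic graph-traversal MDP I_G on state space V, where for every edge (i,j) ∈ E there is an action moving the state deterministically from i to j, the 0-diameter satisfies d_c(G) ≤ τ₀(I_G) ≤ 2·d_c(G). -/
import Mathlib


open Finset

/-- There is a directed walk of length exactly `n` from `v` to `v'` along edges `E`. -/
def WalkLen {V : Type*} (E : V → V → Prop) (v v' : V) (n : ℕ) : Prop :=
  ∃ f : ℕ → V, f 0 = v ∧ f n = v' ∧ ∀ i < n, E (f i) (f (i + 1))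

/-- Directed graph distance: the least length of a directed walk from `v` to `v'`. -/
noncomputable def gdist {V : Type*} (E : V → V → Prop) (v v' : V) : ℕ :=
  sInf {n | WalkLen E v v' n}

/-- Classical diameter: the maximum over ordered pairs of the graph distance. -/
noncomputable def gdiam {V : Type*} [Fintype V] (E : V → V → Prop) : ℕ :=
  Finset.univ.sup fun p : V × V => gdist E p.1 p.2

/-- A (one-step, possibly randomized) transition kernel supported on the edges. -/
def IsKernel {V : Type*} [Fintype V] (step : V → V → Prop) (K : V → V → ℝ) : Prop :=
  (∀ s s', 0 ≤ K s s') ∧ (∀ s, ∑ s', K s s' = 1) ∧ (∀ s s', 0 < K s s' → step s s')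

/-- Evolution of a state distribution under a sequence of kernels. -/
def evolve {V : Type*} [Fintype V] (K : ℕ → V → V → ℝ) (ν : V → ℝ) : ℕ → V → ℝ
  | 0 => ν
  | t + 1 => fun s' => ∑ s, evolve K ν t s * K t s s'

/-- `ν'` is exactly reachable from `ν` in `t` steps by some randomized policy. -/
def ReachableIn {V : Type*} [Fintype V] (step : V → V → Prop) (ν ν' : V → ℝ) (t : ℕ) : Prop :=
  ∃ K : ℕ → V → V → ℝ, (∀ j, IsKernel step (K j)) ∧ evolve K ν t = ν'

/-- `ν` is a probability distribution. -/
def IsProbDist {V : Type*} [Fintype V] (ν : V → ℝ) : Prop :=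
  (∀ s, 0 ≤ ν s) ∧ ∑ s, ν s = 1

/-- The 0-diameter of the deterministic graph-traversal MDP on edge relation `step`. -/
noncomputable def zeroDiameter {V : Type*} [Fintype V] (step : V → V → Prop) : ℕ :=
  sInf {t | ∀ ν ν' : V → ℝ, IsProbDist ν → IsProbDist ν' → ReachableIn step ν ν' t}

/- ### Auxiliary lemmas -/

section Aux

variable {V : Type*}

lemma gdist_le_of_walk {E : V → V → Prop} {v v' : V} {n : ℕ} (h : WalkLen E v v' n) :
    gdist E v v' ≤ n := Nat.sInf_le h

lemma walk_gdist {E : V → V → Prop} {v v' : V} (h : ∃ n, WalkLen E v v' n) :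
    WalkLen E v v' (gdist E v v') := Nat.sInf_mem h

lemma eq_of_walk_zero {E : V → V → Prop} {v v' : V} (h : WalkLen E v v' 0) : v = v' := by
  obtain ⟨f, h0, hn, _⟩ := h; rw [← h0, hn]

/-- If `s ≠ v₀`, there is an edge out of `s` strictly decreasing the distance to `v₀`. -/
lemma exists_step_dec {E : V → V → Prop} (hconn : ∀ v v' : V, ∃ n, WalkLen E v v' n)
    {s v₀ : V} (hne : s ≠ v₀) :
    ∃ u, E s u ∧ gdist E u v₀ < gdist E s v₀ := by
  obtain ⟨f, h0, hn, hE⟩ := walk_gdist (hconn s v₀)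
  set n := gdist E s v₀ with hdef
  have hn0 : n ≠ 0 := by
    intro h
    exact hne (by rw [← h0, ← hn, h])
  refine ⟨f 1, h0 ▸ hE 0 (Nat.pos_of_ne_zero hn0), ?_⟩
  have hwalk : WalkLen E (f 1) v₀ (n - 1) := by
    refine ⟨fun i => f (i + 1), rfl, ?_, ?_⟩
    · show f (n - 1 + 1) = v₀
      rw [Nat.sub_add_cancel (Nat.one_le_iff_ne_zero.2 hn0)]; exact hn
    · intro i hi
      exact hE (i + 1) (by omega)
  calc gdist E (f 1) v₀ ≤ n - 1 := gdist_le_of_walk hwalk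
    _ < n := by omega

variable [Fintype V]

lemma gdist_le_gdiam (E : V → V → Prop) (v v' : V) : gdist E v v' ≤ gdiam E :=
  Finset.le_sup (f := fun p : V × V => gdist E p.1 p.2) (Finset.mem_univ (v, v'))

lemma evolve_nonneg {E : V → V → Prop} {K : ℕ → V → V → ℝ} (hK : ∀ j, IsKernel E (K j))
    {ν : V → ℝ} (hν : ∀ s, 0 ≤ ν s) : ∀ t s, 0 ≤ evolve K ν t s := by
  intro t
  induction t with
  | zero => exact hν
  | succ t ih =>
    intro s
    exact Finset.sum_nonneg fun u _ => mul_nonneg (ih u) ((hK t).1 u s)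

lemma walk_of_evolve_pos {E : V → V → Prop} {K : ℕ → V → V → ℝ} (hK : ∀ j, IsKernel E (K j))
    {ν : V → ℝ} (hν : ∀ s, 0 ≤ ν s) :
    ∀ t s', 0 < evolve K ν t s' → ∃ s, 0 < ν s ∧ WalkLen E s s' t := by
  intro t
  induction t with
  | zero =>
    intro s' h
    exact ⟨s', h, fun _ => s', rfl, rfl, by omega⟩
  | succ t ih =>
    intro s' h
    have : ∃ s, 0 < evolve K ν t s * K t s s' := by
      by_contra hcon
      push_neg at hcon
      have : ∑ s, evolve K ν t s * K t s s' ≤ 0 := Finset.sum_nonpos fun s _ => hcon s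
      simp only [evolve] at h
      linarith
    obtain ⟨s, hs⟩ := this
    have h1 : 0 < evolve K ν t s := by
      rcases lt_or_eq_of_le (evolve_nonneg hK hν t s) with h' | h'
      · exact h'
      · exfalso; rw [← h'] at hs; simp at hs
    have h2 : 0 < K t s s' := by
      rcases lt_or_eq_of_le ((hK t).1 s s') with h' | h'
      · exact h'
      · exfalso; rw [← h'] at hs; simp at hs
    obtain ⟨s₀, hs₀, f, hf0, hft, hfE⟩ := ih s h1
    refine ⟨s₀, hs₀, fun i => if i = t + 1 then s' else f i, by simp [hf0], by simp, ?_⟩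
    intro i hi
    rcases Nat.lt_or_ge i t with h' | h'
    · have e1 : ¬ i = t + 1 := by omega
      have e2 : ¬ i + 1 = t + 1 := by omega
      have e3 : ¬ i = t := by omega
      simpa [e1, e2, e3] using hfE i h'
    · show E (if i = t + 1 then s' else f i) (if i + 1 = t + 1 then s' else f (i + 1))
      rw [if_neg (by omega : ¬ i = t + 1), if_pos (by omega : i + 1 = t + 1)]
      have hit : i = t := by omega
      rw [hit, hft]
      exact (hK t).2.2 s s' h2

/-- The key coupling construction: transporting a family of weighted paths gives
exact reachability of the final marginal from the initial marginal. -/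
lemma reachable_of_paths [DecidableEq V] {E : V → V → Prop} (F : V → V) (hF : ∀ s, E s (F s))
    {A : Type*} [Fintype A] (w : A → ℝ) (hw : ∀ a, 0 ≤ w a)
    (g : A → ℕ → V) (T : ℕ) (hg : ∀ a, ∀ i < T, E (g a i) (g a (i + 1))) :
    ReachableIn E (fun s => ∑ a, if g a 0 = s then w a else 0)
      (fun s => ∑ a, if g a T = s then w a else 0) T := by
  classical
  set μ : ℕ → V → ℝ := fun j s => ∑ a, if g a j = s then w a else 0 with hμdef
  have hμ0 : ∀ j s, 0 ≤ μ j s :=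
    fun j s => Finset.sum_nonneg fun a _ => by split <;> simp [hw a]
  set N : ℕ → V → V → ℝ := fun j s u => ∑ a, if g a j = s ∧ g a (j + 1) = u then w a else 0
    with hNdef
  have hN0 : ∀ j s u, 0 ≤ N j s u :=
    fun j s u => Finset.sum_nonneg fun a _ => by split <;> simp [hw a]
  have hNsum : ∀ j s, ∑ u, N j s u = μ j s := by
    intro j s
    rw [hNdef, Finset.sum_comm]
    refine Finset.sum_congr rfl fun a _ => ?_
    simp only [ite_and]
    by_cases h : g a j = s <;> simp [h]
  have hNle : ∀ j s u, N j s u ≤ μ j s := by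
    intro j s u
    rw [← hNsum j s]
    exact Finset.single_le_sum (fun u _ => hN0 j s u) (Finset.mem_univ u)
  set K : ℕ → V → V → ℝ := fun j s u =>
    if j < T ∧ 0 < μ j s then N j s u / μ j s else (if u = F s then 1 else 0) with hKdef
  have hKer : ∀ j, IsKernel E (K j) := by
    intro j
    refine ⟨fun s u => ?_, fun s => ?_, fun s u hpos => ?_⟩
    · by_cases h : j < T ∧ 0 < μ j s
      · have e : K j s u = N j s u / μ j s := if_pos h
        rw [e]; exact div_nonneg (hN0 j s u) (hμ0 j s)
      · have e : K j s u = if u = F s then 1 else 0 := if_neg h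
        rw [e]; split <;> norm_num
    · by_cases h : j < T ∧ 0 < μ j s
      · have e : ∀ u, K j s u = N j s u / μ j s := fun u => if_pos h
        rw [Finset.sum_congr rfl fun u _ => e u, ← Finset.sum_div, hNsum j s]
        exact div_self (ne_of_gt h.2)
      · have e : ∀ u, K j s u = if u = F s then 1 else 0 := fun u => if_neg h
        rw [Finset.sum_congr rfl fun u _ => e u]
        simp
    · by_cases h : j < T ∧ 0 < μ j s
      · have e : K j s u = N j s u / μ j s := if_pos h
        rw [e] at hpos
        have hNpos : 0 < N j s u := by
          by_contra hc
          push_neg at hc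
          have : N j s u = 0 := le_antisymm hc (hN0 j s u)
          rw [this] at hpos; simp at hpos
        have : ∃ a, (0 : ℝ) < if g a j = s ∧ g a (j + 1) = u then w a else 0 := by
          by_contra hc
          push_neg at hc
          have : N j s u ≤ 0 := Finset.sum_nonpos fun a _ => hc a
          linarith
        obtain ⟨a, ha⟩ := this
        have hP : g a j = s ∧ g a (j + 1) = u := by
          by_contra hc; rw [if_neg hc] at ha; exact lt_irrefl 0 ha
        rw [← hP.1, ← hP.2]
        exact hg a j h.1
      · have e : K j s u = if u = F s then 1 else 0 := if_neg h
        rw [e] at hpos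
        have : u = F s := by
          by_contra hc; rw [if_neg hc] at hpos; exact lt_irrefl 0 hpos
        rw [this]; exact hF s
  refine ⟨K, hKer, ?_⟩
  have key : ∀ j ≤ T, evolve K (μ 0) j = μ j := by
    intro j
    induction j with
    | zero => intro _; rfl
    | succ j ih =>
      intro hj
      have hjT : j < T := hj
      funext u
      show ∑ s, evolve K (μ 0) j s * K j s u = μ (j + 1) u
      rw [ih (le_of_lt hjT)]
      have step : ∀ s, μ j s * K j s u = N j s u := by
        intro s
        by_cases h : 0 < μ j s
        · have e : K j s u = N j s u / μ j s := if_pos ⟨hjT, h⟩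
          rw [e]
          field_simp
        · have hμz : μ j s = 0 := le_antisymm (not_lt.1 h) (hμ0 j s)
          have hNz : N j s u = 0 := le_antisymm (hμz ▸ hNle j s u) (hN0 j s u)
          rw [hμz, hNz, zero_mul]
      rw [Finset.sum_congr rfl fun s _ => step s]
      rw [hNdef, Finset.sum_comm]
      refine Finset.sum_congr rfl fun a _ => ?_
      simp only [ite_and]
      by_cases h : g a (j + 1) = u
      · simp only [h, if_true]
        simp
      · simp [h]
  exact key T le_rfl

end Aux

theorem stmt6 {V : Type*} [Fintype V] [Nonempty V] (E : V → V → Prop)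
    (hconn : ∀ v v' : V, ∃ n, WalkLen E v v' n)
    (hloop : ∃ v : V, E v v) :
    gdiam E ≤ zeroDiameter E ∧ zeroDiameter E ≤ 2 * gdiam E := by
  classical
  obtain ⟨v₀, hv₀⟩ := hloop
  set d := gdiam E with hd
  -- a step function decreasing distance to v₀
  have hFex : ∃ F : V → V, (∀ s, E s (F s)) ∧ F v₀ = v₀ ∧
      ∀ s, s ≠ v₀ → gdist E (F s) v₀ < gdist E s v₀ := by
    choose u hu1 hu2 using fun s (h : s ≠ v₀) => exists_step_dec hconn h
    refine ⟨fun s => if h : s = v₀ then v₀ else u s h, fun s => ?_, by simp, fun s h => ?_⟩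
    · by_cases h : s = v₀
      · subst h; simpa using hv₀
      · simpa [h] using hu1 s h
    · simpa [h] using hu2 s h
  obtain ⟨F, hFE, hFfix, hFdec⟩ := hFex
  -- iterating F for at least the distance reaches v₀
  have hFiter : ∀ k s, gdist E s v₀ ≤ k → F^[k] s = v₀ := by
    intro k
    induction k with
    | zero =>
      intro s hs
      have : WalkLen E s v₀ 0 := by
        have := walk_gdist (hconn s v₀)
        rwa [Nat.le_zero.1 hs] at this
      exact eq_of_walk_zero this
    | succ k ih =>
      intro s hs
      by_cases h : s = v₀
      · rw [Function.iterate_succ_apply, h, hFfix]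
        refine ih v₀ ?_
        have hw0 : WalkLen E v₀ v₀ 0 := ⟨fun _ => v₀, rfl, rfl, by omega⟩
        have := gdist_le_of_walk hw0
        omega
      · rw [Function.iterate_succ_apply]
        exact ih (F s) (by have := hFdec s h; omega)
  have hFd : ∀ s, F^[d] s = v₀ := fun s => hFiter d s (gdist_le_gdiam E s v₀)
  -- in the degenerate case, all vertices coincide
  have hsub : d = 0 → ∀ x y : V, x = y := by
    intro h0 x y
    have h1 : gdist E x y = 0 := by
      have := gdist_le_gdiam E x y; omega
    have := walk_gdist (hconn x y)
    rw [h1] at this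
    exact eq_of_walk_zero this
  -- padded path from v₀ to each target, of length exactly d
  have hpath : ∀ s' : V, ∃ p : ℕ → V, p 0 = v₀ ∧ p d = s' ∧ ∀ i < d, E (p i) (p (i + 1)) := by
    intro s'
    obtain ⟨f, hf0, hfn, hfE⟩ := walk_gdist (hconn v₀ s')
    set n := gdist E v₀ s' with hn
    have hnd : n ≤ d := gdist_le_gdiam E v₀ s'
    set m := d - n with hm
    refine ⟨fun i => if i < m then v₀ else f (i - m), ?_, ?_, ?_⟩
    · by_cases h : 0 < m
      · simp [h]
      · have : m = 0 := by omega
        simp [this, hf0]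
    · have h1 : ¬ d < m := by omega
      have h2 : d - m = n := by omega
      simp [h1, h2, hfn]
    · intro i hi
      by_cases h : i < m
      · have hi1 : i + 1 ≤ m := h
        by_cases h' : i + 1 < m
        · simpa [h, h'] using hv₀
        · have : i + 1 - m = 0 := by omega
          simpa [h, h', this, hf0] using hv₀
      · have h' : ¬ i + 1 < m := by omega
        have h2 : i + 1 - m = (i - m) + 1 := by omega
        have h3 : i - m < n := by omega
        simpa [h, h', h2] using hfE (i - m) h3
  choose p hp0 hpd hpE using hpath
  -- the combined paths of length 2d
  set g : V × V → ℕ → V := fun a i => if i < d then F^[i] a.1 else p a.2 (i - d) with hgdef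
  have hg0 : ∀ a : V × V, g a 0 = a.1 := by
    intro a
    by_cases h : 0 < d
    · simp [hgdef, h]
    · have hd0 : d = 0 := by omega
      simp only [hgdef, hd0, Nat.lt_irrefl, if_false]
      exact hsub hd0 _ _
  have hg2d : ∀ a : V × V, g a (2 * d) = a.2 := by
    intro a
    have h : ¬ 2 * d < d := by omega
    have h2 : 2 * d - d = d := by omega
    simp [hgdef, h, h2, hpd]
  have hgE : ∀ a : V × V, ∀ i < 2 * d, E (g a i) (g a (i + 1)) := by
    intro a i hi
    by_cases h : i < d
    · have hgi : g a i = F^[i] a.1 := by simp [hgdef, h]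
      by_cases h' : i + 1 < d
      · have : g a (i + 1) = F (F^[i] a.1) := by
          simp [hgdef, h', Function.iterate_succ_apply']
        rw [hgi, this]; exact hFE _
      · have hi1 : i + 1 = d := by omega
        have : g a (i + 1) = F (F^[i] a.1) := by
          have h2 : i + 1 - d = 0 := by omega
          simp only [hgdef, h', if_false, h2, hp0]
          rw [← hFd a.1, ← hi1, Function.iterate_succ_apply']
        rw [hgi, this]; exact hFE _
    · have h' : ¬ i + 1 < d := by omega
      have h2 : i + 1 - d = (i - d) + 1 := by omega
      have h3 : i - d < d := by omega
      simpa [hgdef, h, h', h2] using hpE a.2 (i - d) h3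
  -- the upper bound: 2d is in the defining set
  have hmem : (2 * d) ∈ {t | ∀ ν ν' : V → ℝ, IsProbDist ν → IsProbDist ν' →
      ReachableIn E ν ν' t} := by
    intro ν ν' hν hν'
    have hw : ∀ a : V × V, 0 ≤ ν a.1 * ν' a.2 := fun a => mul_nonneg (hν.1 a.1) (hν'.1 a.2)
    have := reachable_of_paths F hFE (fun a : V × V => ν a.1 * ν' a.2) hw g (2 * d) hgE
    have e1 : (fun s => ∑ a : V × V, if g a 0 = s then ν a.1 * ν' a.2 else 0) = ν := by
      funext s
      rw [Fintype.sum_prod_type]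
      have : ∀ v : V, (∑ s' : V, if g (v, s') 0 = s then ν v * ν' s' else 0)
          = if v = s then ν v else 0 := by
        intro v
        have : ∀ s' : V, g (v, s') 0 = v := fun s' => hg0 (v, s')
        simp only [this]
        by_cases h : v = s
        · simp only [h, if_true, ← Finset.mul_sum, hν'.2, mul_one]
        · simp [h]
      rw [Finset.sum_congr rfl fun v _ => this v]
      simp [Finset.sum_ite_eq' Finset.univ s ν]
    have e2 : (fun s => ∑ a : V × V, if g a (2 * d) = s then ν a.1 * ν' a.2 else 0) = ν' := by
      funext s
      rw [Fintype.sum_prod_type]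
      have h1 : ∀ v : V, (∑ s' : V, if g (v, s') (2 * d) = s then ν v * ν' s' else 0)
          = ν v * ν' s := by
        intro v
        have : ∀ s' : V, g (v, s') (2 * d) = s' := fun s' => hg2d (v, s')
        simp only [this]
        simp [Finset.sum_ite_eq' Finset.univ s]
      rw [Finset.sum_congr rfl fun v _ => h1 v, ← Finset.sum_mul, hν.2, one_mul]
    rwa [e1, e2] at this
  constructor
  · -- lower bound
    refine le_csInf ⟨2 * d, hmem⟩ ?_
    intro t ht
    rw [hd, gdiam]
    refine Finset.sup_le fun q _ => ?_
    set v := q.1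
    set v' := q.2
    have hδ : ∀ x : V, IsProbDist (fun s => if s = x then (1 : ℝ) else 0) := by
      intro x
      exact ⟨fun s => by by_cases h : s = x <;> simp [h], by simp⟩
    obtain ⟨K, hK, hev⟩ := ht _ _ (hδ v) (hδ v')
    have hpos : 0 < evolve K (fun s => if s = v then (1:ℝ) else 0) t v' := by
      rw [hev]; norm_num
    obtain ⟨s, hs, hwalk⟩ := walk_of_evolve_pos hK (hδ v).1 t v' hpos
    have hsv : s = v := by
      by_contra h
      rw [if_neg h] at hs
      exact lt_irrefl 0 hs
    subst hsv
    exact gdist_le_of_walk hwalk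
  · exact Nat.sInf_le hmem
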